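/- arXiv:1603.05798 — 4 statements merged into one kernel-verified Lean document; each statement's English description precedes it below -/
import Mathlib

section
/- Define p^{(0)}₀₀(t) = 1 − e^{−t} + e^{−2t}/4, p^{(0)}₀₁(t) = e^{−t}(3 − 2e^{−t})/4, p^{(0)}₁₀(t) = e^{−t}/4, p^{(0)}₁₁(t) = e^{−2t}/4. Then for all t > 0: p^{(0)}₀₀(t) > p^{(0)}₀₁(t) > p^{(0)}₁₀(t) > p^{(0)}₁₁(t), and these four numbers sum to 1. -/
/-- The populations of the evolved maximally mixed state of the two-qubit lossy channel
are strictly decreasing in the order `00, 01, 10, 11` for all `t > 0`, and sum to `1`. -/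
theorem evolved_maximally_mixed_passive (t : ℝ) (ht : 0 < t) :
    (Real.exp (-t) * (3 - 2 * Real.exp (-t)) / 4 <
        1 - Real.exp (-t) + Real.exp (-2 * t) / 4) ∧
    (Real.exp (-t) / 4 < Real.exp (-t) * (3 - 2 * Real.exp (-t)) / 4) ∧
    (Real.exp (-2 * t) / 4 < Real.exp (-t) / 4) ∧
    (1 - Real.exp (-t) + Real.exp (-2 * t) / 4) +
        Real.exp (-t) * (3 - 2 * Real.exp (-t)) / 4 +
        Real.exp (-t) / 4 + Real.exp (-2 * t) / 4 = 1 := by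
  have h2 : Real.exp (-2 * t) = Real.exp (-t) ^ 2 := by
    rw [← Real.exp_nat_mul]; ring_nf
  set x := Real.exp (-t) with hx
  have hx0 : 0 < x := Real.exp_pos _
  have hx1 : x < 1 := by
    rw [hx, Real.exp_lt_one_iff]; linarith
  rw [h2]
  refine ⟨by nlinarith, by nlinarith, by nlinarith, by ring⟩
end

section
/- Define p¹(t) = (1 − (2/3)e^{−t}, e^{−t}/3, e^{−t}/3, 0) and p²(t) = (1 − e^{−t} + e^{−2t}/3, e^{−t}(1 − (2/3)e^{−t}), 0, e^{−2t}/3). Then for all t > 0: p¹₁(t) > p²₁(t), but p¹₁(t) + p¹₂(t) < p²₁(t) + p²₂(t). Consequently neither of the decreasingly-sorted vectors p¹(t), p²(t) majorizes the other. -/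
/-!
Writing `x = e^{-t} ∈ (0, 1)`, both spectra are explicit quadratics in `x`. The largest
entries compare as `1 - x + x²/3 < 1 - 2x/3`, the sums of the two largest as
`1 - x/3 < 1 - x²/3`; both reduce to `x² < x`.
The first vector is already sorted and the second becomes sorted after swapping its last two
entries; since the decreasing rearrangement of a tuple is unique (`Tuple.unique_antitone`),
these are the vectors whose partial sums the majorization condition compares.
-/

open Finset

lemma Fin.sum_filter_val_lt_one {M : Type*} [AddCommMonoid M] {n : ℕ} (q : Fin (n + 1) → M) :
    ∑ i ∈ univ.filter (fun i : Fin (n + 1) => (i : ℕ) < 1), q i = q 0 := by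
  rw [show univ.filter (fun i : Fin (n + 1) => (i : ℕ) < 1) = {0} by
    ext i
    simp only [mem_filter, mem_univ, true_and, mem_singleton, Nat.lt_one_iff, Fin.ext_iff,
      Fin.val_zero]]
  exact sum_singleton q 0

lemma Fin.sum_filter_val_lt_two {M : Type*} [AddCommMonoid M] {n : ℕ} (q : Fin (n + 2) → M) :
    ∑ i ∈ univ.filter (fun i : Fin (n + 2) => (i : ℕ) < 2), q i = q 0 + q 1 := by
  rw [show univ.filter (fun i : Fin (n + 2) => (i : ℕ) < 2) = {0, 1} by
    ext i
    simp only [mem_filter, mem_univ, true_and, mem_insert, mem_singleton, Fin.ext_iff,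
      Fin.val_zero, Fin.val_one]
    omega]
  exact sum_pair (by simp)

namespace MultistepJumps

variable {x : ℝ}

noncomputable def passiveOutput (x : ℝ) : Fin 4 → ℝ := ![1 - 2 / 3 * x, x / 3, x / 3, 0]

noncomputable def nonPassiveOutput (x : ℝ) : Fin 4 → ℝ :=
  ![1 - x + x ^ 2 / 3, x * (1 - 2 / 3 * x), 0, x ^ 2 / 3]

lemma passiveOutput_antitone (hx0 : 0 ≤ x) (hx1 : x ≤ 1) : Antitone (passiveOutput x) := by
  rw [Fin.antitone_iff_succ_le]
  intro i
  fin_cases i <;> simp [passiveOutput] <;> linarith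

lemma nonPassiveOutput_comp_swap_antitone (hx0 : 0 ≤ x) (hx1 : x ≤ 1) :
    Antitone (nonPassiveOutput x ∘ Equiv.swap 2 3) := by
  rw [Fin.antitone_iff_succ_le]
  intro i
  fin_cases i <;> simp [nonPassiveOutput, Equiv.swap_apply_def] <;> nlinarith

lemma nonPassiveOutput_zero_lt_passiveOutput_zero (hx0 : 0 < x) (hx1 : x < 1) :
    nonPassiveOutput x 0 < passiveOutput x 0 := by
  simp only [nonPassiveOutput, passiveOutput, Matrix.cons_val_zero]
  nlinarith

lemma passiveOutput_top_two_lt (hx0 : 0 < x) (hx1 : x < 1) :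
    passiveOutput x 0 + passiveOutput x 1 < nonPassiveOutput x 0 + nonPassiveOutput x 1 := by
  simp only [nonPassiveOutput, passiveOutput, Matrix.cons_val_zero, Matrix.cons_val_one]
  nlinarith

end MultistepJumps

open MultistepJumps in
/-- The output spectra `p¹(t)` and `p²(t)` of the two-qubit lossy channel with
multi-step jumps satisfy `p¹₁(t) > p²₁(t)` but `p¹₁(t)+p¹₂(t) < p²₁(t)+p²₂(t)` for all
`t > 0`; consequently neither decreasingly-sorted vector majorizes the other. -/
theorem no_majorization_multistep_jumps (t : ℝ) (ht : 0 < t)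
    (p1 p2 : Fin 4 → ℝ)
    (hp1 : p1 = ![1 - (2 / 3) * Real.exp (-t), Real.exp (-t) / 3, Real.exp (-t) / 3, 0])
    (hp2 : p2 = ![1 - Real.exp (-t) + Real.exp (-2 * t) / 3,
      Real.exp (-t) * (1 - (2 / 3) * Real.exp (-t)), 0, Real.exp (-2 * t) / 3]) :
    p2 0 < p1 0 ∧ p1 0 + p1 1 < p2 0 + p2 1 ∧
    ∀ q1 q2 : Fin 4 → ℝ, Antitone q1 → Antitone q2 →
      (∃ σ : Equiv.Perm (Fin 4), q1 = p1 ∘ σ) →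
      (∃ σ : Equiv.Perm (Fin 4), q2 = p2 ∘ σ) →
      (¬ ∀ n : ℕ, n ≤ 4 →
          ∑ i ∈ Finset.univ.filter (fun i : Fin 4 => (i : ℕ) < n), q2 i ≤
            ∑ i ∈ Finset.univ.filter (fun i : Fin 4 => (i : ℕ) < n), q1 i) ∧
      (¬ ∀ n : ℕ, n ≤ 4 →
          ∑ i ∈ Finset.univ.filter (fun i : Fin 4 => (i : ℕ) < n), q1 i ≤
            ∑ i ∈ Finset.univ.filter (fun i : Fin 4 => (i : ℕ) < n), q2 i) := by
  set x := Real.exp (-t)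
  have hx0 : 0 < x := Real.exp_pos _
  have hx1 : x < 1 := Real.exp_lt_one_iff.mpr (neg_neg_of_pos ht)
  obtain rfl : p1 = passiveOutput x := hp1
  obtain rfl : p2 = nonPassiveOutput x := by
    rw [hp2, show -2 * t = -t + -t by ring, Real.exp_add, ← sq]; rfl
  have htop := nonPassiveOutput_zero_lt_passiveOutput_zero hx0 hx1
  have htwo := passiveOutput_top_two_lt hx0 hx1
  refine ⟨htop, htwo, ?_⟩
  rintro q1 q2 hq1 hq2 ⟨σ1, rfl⟩ ⟨σ2, rfl⟩
  rw [Tuple.unique_antitone (τ := 1) hq1 (passiveOutput_antitone hx0.le hx1.le),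
    Tuple.unique_antitone hq2 (nonPassiveOutput_comp_swap_antitone hx0.le hx1.le)]
  refine ⟨fun h => (h 2 (by norm_num)).not_gt ?_, fun h => (h 1 (by norm_num)).not_gt ?_⟩
  · simp only [Fin.sum_filter_val_lt_two]
    simpa [Equiv.swap_apply_def] using htwo
  · simp only [Fin.sum_filter_val_lt_one]
    simpa [Equiv.swap_apply_def] using htop
end

section
/- Let s₃(t) = 1 − e^{−2t}/2 and s̃₃(t) = 1 − e^{−3t}(5 − 6e^{−t} + 2e^{−2t})/2. Then s₃(t) < s̃₃(t) holds if and only if e^{−t} < 1 − 1/√2, i.e. for t > ln(2 + √2). -/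
lemma attenuator_aux (x : ℝ) (hx : 0 < x) (hx1 : x ≤ 1) :
    (1 - x ^ 2 / 2 < 1 - x ^ 3 * (5 - 6 * x + 2 * x ^ 2) / 2) ↔ x < 1 - 1 / Real.sqrt 2 := by
  have hs2 : Real.sqrt 2 ^ 2 = 2 := Real.sq_sqrt (by norm_num)
  have hs1 : 1 < Real.sqrt 2 := by
    nlinarith [Real.sqrt_nonneg 2]
  have hspos : (0:ℝ) < Real.sqrt 2 := by linarith
  have hinv : Real.sqrt 2 * (1 / Real.sqrt 2) = 1 := by
    field_simp
  have hu2 : (Real.sqrt 2 * (1 - x)) ^ 2 = 2 * (1 - x) ^ 2 := by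
    rw [mul_pow, hs2]
  constructor
  · intro h
    by_contra hc
    push_neg at hc
    have h1x : (0:ℝ) ≤ 1 - x := by linarith
    have hc' : Real.sqrt 2 * (1 - x) ≤ 1 := by
      have := mul_le_mul_of_nonneg_left (show 1 - x ≤ 1 / Real.sqrt 2 by linarith) hspos.le
      linarith [hinv]
    have hu0 : 0 ≤ Real.sqrt 2 * (1 - x) := mul_nonneg hspos.le h1x
    have hfac : 0 ≤ 1 - 2 * (1 - x) ^ 2 := by nlinarith
    nlinarith [mul_nonneg (mul_nonneg (sq_nonneg x) h1x) hfac]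
  · intro h
    have h1x : (0:ℝ) < 1 - x := by
      have : (0:ℝ) < 1 / Real.sqrt 2 := by positivity
      linarith
    have hc' : 1 < Real.sqrt 2 * (1 - x) := by
      have := mul_lt_mul_of_pos_left (show 1 / Real.sqrt 2 < 1 - x by linarith) hspos
      linarith [hinv]
    have hfac : 0 < 2 * (1 - x) ^ 2 - 1 := by nlinarith
    nlinarith [mul_pos (mul_pos (mul_pos hx hx) h1x) hfac]

/-- For `t ≥ 0`, the inequality `s₃(t) < s̃₃(t)` between the partial eigenvalue sums of
the two-mode quantum-limited attenuator outputs holds iff `e^{−t} < 1 − 1/√2`, i.e. iff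
`t > ln(2 + √2)`. -/
theorem attenuator_counterexample_threshold (t : ℝ) (ht : 0 ≤ t) :
    ((1 - Real.exp (-2 * t) / 2 <
        1 - Real.exp (-3 * t) * (5 - 6 * Real.exp (-t) + 2 * Real.exp (-2 * t)) / 2) ↔
      Real.exp (-t) < 1 - 1 / Real.sqrt 2) ∧
    ((1 - Real.exp (-2 * t) / 2 <
        1 - Real.exp (-3 * t) * (5 - 6 * Real.exp (-t) + 2 * Real.exp (-2 * t)) / 2) ↔
      Real.log (2 + Real.sqrt 2) < t) := by
  have hx : 0 < Real.exp (-t) := Real.exp_pos _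
  have hx1 : Real.exp (-t) ≤ 1 := Real.exp_le_one_iff.2 (by linarith)
  have h2 : Real.exp (-2 * t) = Real.exp (-t) ^ 2 := by
    rw [← Real.exp_nat_mul]; norm_num
  have h3 : Real.exp (-3 * t) = Real.exp (-t) ^ 3 := by
    rw [← Real.exp_nat_mul]; norm_num
  have key := attenuator_aux (Real.exp (-t)) hx hx1
  rw [h2, h3]
  refine ⟨key, key.trans ?_⟩
  have hs2 : Real.sqrt 2 ^ 2 = 2 := Real.sq_sqrt (by norm_num)
  have hs1 : 1 < Real.sqrt 2 := by nlinarith [Real.sqrt_nonneg 2]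
  have hspos : (0:ℝ) < Real.sqrt 2 := by linarith
  have hcpos : (0:ℝ) < 1 - 1 / Real.sqrt 2 := by
    rw [sub_pos, div_lt_one hspos]; exact hs1
  rw [← Real.lt_log_iff_exp_lt hcpos]
  have hmul : (1 - 1 / Real.sqrt 2) * (2 + Real.sqrt 2) = 1 := by
    field_simp
    nlinarith
  have hlog : Real.log (1 - 1 / Real.sqrt 2) + Real.log (2 + Real.sqrt 2) = 0 := by
    rw [← Real.log_mul (ne_of_gt hcpos) (by positivity), hmul, Real.log_one]
  constructor <;> intro h <;> linarith
end

section
/- Fix γ > 0, z∞ ∈ (−1, 0), and t > 0. Over all (x₀, y₀, z₀) ∈ ℝ³ with x₀² + y₀² + z₀² ≤ 1, the function F(x₀,y₀,z₀) = (1 + e^{−γt}(x₀² + y₀² + z₀²))/2 + ((1 − e^{−γt})/2)(z∞² − e^{−γt}(z₀ − z∞)²) attains its maximum exactly when x₀² + y₀² = 1 − z∞² and z₀ = z∞. -/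
set_option maxHeartbeats 1000000 in
/-- The purity of the evolved qubit state, as a function of the initial Bloch vector
`(x₀,y₀,z₀)` in the unit ball, attains its maximum exactly when
`x₀² + y₀² = 1 − z∞²` and `z₀ = z∞`. -/
theorem purity_maximizers (γ zinf t : ℝ) (hγ : 0 < γ)
    (hz : zinf ∈ Set.Ioo (-1 : ℝ) 0) (ht : 0 < t)
    (F : ℝ × ℝ × ℝ → ℝ)
    (hF : F = fun v =>
      (1 + Real.exp (-γ * t) * (v.1 ^ 2 + v.2.1 ^ 2 + v.2.2 ^ 2)) / 2 +
        (1 - Real.exp (-γ * t)) / 2 *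
          (zinf ^ 2 - Real.exp (-γ * t) * (v.2.2 - zinf) ^ 2)) :
    ∀ v : ℝ × ℝ × ℝ, v.1 ^ 2 + v.2.1 ^ 2 + v.2.2 ^ 2 ≤ 1 →
      ((∀ w : ℝ × ℝ × ℝ, w.1 ^ 2 + w.2.1 ^ 2 + w.2.2 ^ 2 ≤ 1 → F w ≤ F v) ↔
        (v.1 ^ 2 + v.2.1 ^ 2 = 1 - zinf ^ 2 ∧ v.2.2 = zinf)) := by
  obtain ⟨hz1, hz0⟩ := hz
  obtain ⟨q, hq0, hq1, hqdef⟩ : ∃ q : ℝ, 0 < q ∧ q < 1 ∧ Real.exp (-γ * t) = q :=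
    ⟨_, Real.exp_pos _, by rw [Real.exp_lt_one_iff]; nlinarith, rfl⟩
  rw [hqdef] at hF
  have hzsq : zinf ^ 2 < 1 := by nlinarith
  obtain ⟨M, hM⟩ : ∃ M : ℝ, M = (1 + q) / 2 + (1 - q) / 2 * zinf ^ 2 := ⟨_, rfl⟩
  have hFle : ∀ w : ℝ × ℝ × ℝ, w.1 ^ 2 + w.2.1 ^ 2 + w.2.2 ^ 2 ≤ 1 → F w ≤ M := by
    intro w hw
    rw [hF, hM]
    simp only
    nlinarith [sq_nonneg (w.2.2 - zinf), mul_pos hq0 (sub_pos.mpr hq1),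
      mul_nonneg (mul_nonneg hq0.le (sub_pos.mpr hq1).le) (sq_nonneg (w.2.2 - zinf))]
  have hw0 : ((Real.sqrt (1 - zinf ^ 2), 0, zinf) : ℝ × ℝ × ℝ).1 ^ 2 +
      ((Real.sqrt (1 - zinf ^ 2), 0, zinf) : ℝ × ℝ × ℝ).2.1 ^ 2 +
      ((Real.sqrt (1 - zinf ^ 2), 0, zinf) : ℝ × ℝ × ℝ).2.2 ^ 2 ≤ 1 := by
    simp only
    rw [Real.sq_sqrt (by nlinarith : (0:ℝ) ≤ 1 - zinf ^ 2)]
    ring_nf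
    nlinarith
  have hFw0 : F (Real.sqrt (1 - zinf ^ 2), 0, zinf) = M := by
    rw [hF, hM]
    simp only
    rw [Real.sq_sqrt (by nlinarith : (0:ℝ) ≤ 1 - zinf ^ 2)]
    ring
  intro v hv
  constructor
  · intro hmax
    have h1 : M ≤ F v := hFw0 ▸ hmax _ hw0
    have h2 : F v = M := le_antisymm (hFle v hv) h1
    rw [hF] at h2
    simp only at h2
    -- M - F v = q(1-s)/2 + (1-q)q/2 (z - zinf)^2 = 0
    have key : q * (1 - (v.1 ^ 2 + v.2.1 ^ 2 + v.2.2 ^ 2)) / 2 +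
        (1 - q) * q / 2 * (v.2.2 - zinf) ^ 2 = 0 := by
      rw [hM] at h2; nlinarith [h2]
    have t1 : 0 ≤ q * (1 - (v.1 ^ 2 + v.2.1 ^ 2 + v.2.2 ^ 2)) / 2 := by nlinarith
    have t2 : 0 ≤ (1 - q) * q / 2 * (v.2.2 - zinf) ^ 2 := by
      have := sub_pos.mpr hq1; positivity
    have e1 : q * (1 - (v.1 ^ 2 + v.2.1 ^ 2 + v.2.2 ^ 2)) / 2 = 0 := by linarith
    have e2 : (1 - q) * q / 2 * (v.2.2 - zinf) ^ 2 = 0 := by linarith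
    have hs : v.1 ^ 2 + v.2.1 ^ 2 + v.2.2 ^ 2 = 1 := by
      have hne : q ≠ 0 := ne_of_gt hq0
      have e1' : q * (1 - (v.1 ^ 2 + v.2.1 ^ 2 + v.2.2 ^ 2)) = 0 := by linarith
      rcases mul_eq_zero.mp e1' with h | h
      · exact absurd h hne
      · linarith
    have hzz : v.2.2 = zinf := by
      have : (v.2.2 - zinf) ^ 2 = 0 := by
        have h1q : 0 < 1 - q := sub_pos.mpr hq1
        have h12 : (1 - q) * q / 2 ≠ 0 := by positivity
        rcases mul_eq_zero.mp e2 with h | h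
        · exact absurd h h12
        · exact h
      have := pow_eq_zero_iff (n := 2) (by norm_num) |>.mp this
      linarith
    exact ⟨by rw [← hzz]; linarith, hzz⟩
  · rintro ⟨hxy, hzz⟩
    intro w hw
    have : F v = M := by
      rw [hF, hM]
      simp only
      rw [hzz]
      nlinarith [hxy]
    rw [this]
    exact hFle w hw
end
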